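/- Let M ⊂ ℝ^{n+1}, x ∈ ℝ^{n+1}, and for λ > 0 set M^{x,λ} := λ^{-1}(M - x). Suppose the approximate tangent space T_x M exists in the sense that ∫_{M^{x,λ}} φ dH^n → ∫_{T_x M} φ dH^n as λ → 0 for all continuous compactly supported φ ≥ 0, where T_x M is an n-dimensional linear subspace. If there is a vector v ∈ T_x M with |v| = 1 and a radius r > 0 such that M ∩ B(x - s v, r) = ∅ for all 0 < s ≤ r, then a contradiction follows; i.e., no such tangent space can exist when an open ball tangent to M at x in a tangent direction is disjoint from M. -/

import Mathlib

/-!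
Rescaling around `x` maps the empty balls `B(x - l v, r)`, `0 < l ≤ r`, onto balls around `-v`
of radius `r / l ≥ 1`, so a tent function centred at `-v` of radius `1` integrates to `0` over
every small rescaling of `M`. On the other hand `μH[n]` restricted to the `n`-plane `T` is the
image of an additive Haar measure on `T`, hence positive on the open set where the tent function
is positive, and `-v ∈ T`.
-/

open MeasureTheory Metric Filter Module

section

variable {E : Type*} [NormedAddCommGroup E] [NormedSpace ℝ E]

theorem disjoint_ball_image_smul_sub {l : ℝ} (hl : 0 < l) {M : Set E} {x c : E} {ρ : ℝ}
    (h : Disjoint M (ball (x + l • c) (l * ρ))) :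
    Disjoint ((fun z => l⁻¹ • (z - x)) '' M) (ball c ρ) := by
  rw [Set.disjoint_image_left]
  refine h.mono_right fun z hz => ?_
  have hz' : z - (x + l • c) = l • (l⁻¹ • (z - x) - c) := by
    rw [smul_sub, smul_inv_smul₀ hl.ne']; abel
  rw [Set.mem_preimage, mem_ball, dist_eq_norm] at hz
  rw [mem_ball, dist_eq_norm, hz', norm_smul, Real.norm_of_nonneg hl.le]
  exact mul_lt_mul_of_pos_left hz hl

theorem Submodule.integral_hausdorffMeasure_pos [MeasurableSpace E] [BorelSpace E]
    (T : Submodule ℝ E) [FiniteDimensional ℝ T] {φ : E → ℝ} (hφ : Continuous φ)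
    (hφc : HasCompactSupport φ) (hφ0 : 0 ≤ φ) {p : E} (hp : p ∈ T) (hφp : φ p ≠ 0) :
    0 < ∫ y in (T : Set E), φ y ∂μH[finrank ℝ T] := by
  have hmap : Measure.map ((↑) : T → E) μH[finrank ℝ T] = μH[finrank ℝ T].restrict T := by
    simpa using T.subtypeₗᵢ.isometry.map_hausdorffMeasure (Or.inl (Nat.cast_nonneg _))
  rw [← hmap, integral_map continuous_subtype_val.aemeasurable hφ.aestronglyMeasurable]
  exact (hφ.comp continuous_subtype_val).integral_pos_of_hasCompactSupport_nonneg_nonzero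
    (hφc.comp_isClosedEmbedding T.closed_of_finiteDimensional.isClosedEmbedding_subtypeVal)
    (fun z => hφ0 z) (x := ⟨p, hp⟩) hφp

end

theorem hasCompactSupport_max_sub_dist {X : Type*} [PseudoMetricSpace X] [ProperSpace X]
    (c : X) (ρ : ℝ) :
    HasCompactSupport fun z => max (ρ - dist z c) 0 :=
  HasCompactSupport.intro (isCompact_closedBall c ρ) fun z hz =>
    max_eq_right (by rw [mem_closedBall, not_le] at hz; linarith)

theorem no_tangent_space_with_disjoint_tangent_ball_general (n : ℕ)
    (M : Set (EuclideanSpace ℝ (Fin (n + 1)))) (x : EuclideanSpace ℝ (Fin (n + 1)))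
    (T : Submodule ℝ (EuclideanSpace ℝ (Fin (n + 1)))) (hT : Module.finrank ℝ T = n)
    (htan : ∀ φ : EuclideanSpace ℝ (Fin (n + 1)) → ℝ, Continuous φ → HasCompactSupport φ →
      (∀ z, 0 ≤ φ z) →
      Tendsto (fun l : ℝ => ∫ y in (fun z => l⁻¹ • (z - x)) '' M, φ y ∂μH[n])
        (nhdsWithin 0 (Set.Ioi 0)) (nhds (∫ y in (T : Set (EuclideanSpace ℝ (Fin (n + 1)))), φ y ∂μH[n])))
    (v : EuclideanSpace ℝ (Fin (n + 1))) (hv : v ∈ T)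
    (r : ℝ) (hr : 0 < r)
    (hdisj : ∀ s : ℝ, 0 < s → s ≤ r → M ∩ ball (x - s • v) r = ∅) :
    False := by
  set φ : EuclideanSpace ℝ (Fin (n + 1)) → ℝ := fun z => max (1 - dist z (-v)) 0
  have hφ : Continuous φ := by fun_prop
  have hφ0 : ∀ z, 0 ≤ φ z := fun z => le_max_right _ _
  have hvanish : ∀ᶠ l : ℝ in nhdsWithin 0 (Set.Ioi 0),
      ∫ y in (fun z => l⁻¹ • (z - x)) '' M, φ y ∂μH[n] = 0 := by
    filter_upwards [Ioc_mem_nhdsGT hr] with l ⟨hl, hlr⟩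
    have hM : Disjoint M (ball (x + l • -v) (l * 1)) := by
      refine Set.disjoint_iff_inter_eq_empty.2 (Set.subset_empty_iff.1 ?_)
      rw [← hdisj l hl hlr, smul_neg, ← sub_eq_add_neg, mul_one]
      exact Set.inter_subset_inter_right M (ball_subset_ball hlr)
    refine setIntegral_eq_zero_of_forall_eq_zero fun y hy => max_eq_right ?_
    have hy' := Set.disjoint_left.1 (disjoint_ball_image_smul_sub hl hM) hy
    rw [mem_ball, not_lt] at hy'
    linarith
  have hT0 : ∫ y in (T : Set (EuclideanSpace ℝ (Fin (n + 1)))), φ y ∂μH[n] = 0 :=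
    tendsto_nhds_unique (htan φ hφ (hasCompactSupport_max_sub_dist (-v) 1) hφ0)
      (tendsto_const_nhds.congr' (hvanish.mono fun _ h => h.symm))
  have hpos := T.integral_hausdorffMeasure_pos hφ (hasCompactSupport_max_sub_dist (-v) 1) hφ0
    (T.neg_mem hv) (by simp [φ])
  rw [hT, hT0] at hpos
  exact lt_irrefl 0 hpos

/-- If the approximate tangent space `T` of `M` at `x` exists (in the sense of weak-*
convergence of the rescalings `M^{x,λ} = λ⁻¹(M - x)` against continuous compactly
supported nonnegative test functions), and there is a unit vector `v ∈ T` and a radius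
`r > 0` such that the balls `B(x - s v, r)` for `0 < s ≤ r` are all disjoint from `M`,
then a contradiction follows. -/
theorem no_tangent_space_with_disjoint_tangent_ball (n : ℕ)
    (M : Set (EuclideanSpace ℝ (Fin (n + 1)))) (x : EuclideanSpace ℝ (Fin (n + 1)))
    (T : Submodule ℝ (EuclideanSpace ℝ (Fin (n + 1)))) (hT : Module.finrank ℝ T = n)
    (htan : ∀ φ : EuclideanSpace ℝ (Fin (n + 1)) → ℝ, Continuous φ → HasCompactSupport φ →
      (∀ z, 0 ≤ φ z) →
      Tendsto (fun l : ℝ => ∫ y in (fun z => l⁻¹ • (z - x)) '' M, φ y ∂μH[n])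
        (nhdsWithin 0 (Set.Ioi 0)) (nhds (∫ y in (T : Set (EuclideanSpace ℝ (Fin (n + 1)))), φ y ∂μH[n])))
    (v : EuclideanSpace ℝ (Fin (n + 1))) (hv : v ∈ T) (hv1 : ‖v‖ = 1)
    (r : ℝ) (hr : 0 < r)
    (hdisj : ∀ s : ℝ, 0 < s → s ≤ r → M ∩ ball (x - s • v) r = ∅) :
    False :=
  no_tangent_space_with_disjoint_tangent_ball_general n M x T hT htan v hv r hr hdisj
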